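/- If ‖√Σ L √Υ‖ < 1, with Σ, Υ strongly monotone self-adjoint bounded linear and L bounded linear, then V(x,u) = (Υ⁻¹x − L*u, Σ⁻¹u − Lx) is strongly monotone on H ⊕ G; in particular ran V = H × G is closed. -/

import Mathlib

/-!
Write `A = √Υ`, `B = √Σ`. Since `Υ Υ⁻¹ = 1`, every `x` equals `A a` with `a = A Υ⁻¹ x`, and
symmetry of `A` gives `⟨Υ⁻¹ x, x⟩ = ‖a‖²`; likewise `u = B b` with `⟨Σ⁻¹ u, u⟩ = ‖b‖²`. Hence
`⟨V(x,u), (x,u)⟩ = ‖a‖² + ‖b‖² - 2⟨B L A a, b⟩ ≥ (1 - ‖B L A‖)(‖a‖² + ‖b‖²)`, which dominates a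
positive multiple of `‖x‖² + ‖u‖²` because `A` and `B` are bounded. Lax–Milgram then makes `V`
surjective.
-/

open RealInnerProductSpace

/-- The pair `(x, u)` regarded as an element of the Hilbert direct sum `H ⊕ G`. -/
noncomputable def pd {H G : Type*} (x : H) (u : G) : WithLp 2 (H × G) :=
  (WithLp.equiv 2 (H × G)).symm (x, u)

section SquareRoot

variable {E : Type*} [NormedAddCommGroup E] [InnerProductSpace ℝ E] {A T S : E →L[ℝ] E}

lemma apply_apply_of_comp_self_eq (hAT : A.comp A = T) (hTS : T.comp S = .id ℝ E) (x : E) :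
    A (A (S x)) = x := by
  rw [← ContinuousLinearMap.comp_apply, hAT, ← ContinuousLinearMap.comp_apply, hTS,
    ContinuousLinearMap.id_apply]

lemma inner_apply_self_eq_norm_sq_of_comp_self_eq (hA : (A : E →ₗ[ℝ] E).IsSymmetric)
    (hAT : A.comp A = T) (hTS : T.comp S = .id ℝ E) (x : E) :
    ⟪S x, x⟫ = ‖A (S x)‖ ^ 2 := by
  calc ⟪S x, x⟫ = ⟪S x, A (A (S x))⟫ := by rw [apply_apply_of_comp_self_eq hAT hTS]
    _ = ⟪A (S x), A (S x)⟫ := (hA _ _).symm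
    _ = ‖A (S x)‖ ^ 2 := real_inner_self_eq_norm_sq _

end SquareRoot

section BlockForm

variable {H G : Type*} [NormedAddCommGroup H] [InnerProductSpace ℝ H]
  [NormedAddCommGroup G] [InnerProductSpace ℝ G]

lemma inner_apply_le_norm_comp_mul (A : H →L[ℝ] H) {B : G →L[ℝ] G} (L : H →L[ℝ] G)
    (hB : (B : G →ₗ[ℝ] G).IsSymmetric) (a : H) (b : G) :
    ⟪L (A a), B b⟫ ≤ ‖B.comp (L.comp A)‖ * ‖a‖ * ‖b‖ :=
  calc ⟪L (A a), B b⟫ = ⟪B.comp (L.comp A) a, b⟫ := (hB _ _).symm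
    _ ≤ ‖B.comp (L.comp A) a‖ * ‖b‖ := real_inner_le_norm _ _
    _ ≤ ‖B.comp (L.comp A)‖ * ‖a‖ * ‖b‖ := by gcongr; exact ContinuousLinearMap.le_opNorm _ _

lemma exists_pos_mul_le_of_norm_comp_lt_one (A : H →L[ℝ] H) {B : G →L[ℝ] G} (L : H →L[ℝ] G)
    (hB : (B : G →ₗ[ℝ] G).IsSymmetric) (hBLA : ‖B.comp (L.comp A)‖ < 1) :
    ∃ ρ > (0 : ℝ), ∀ (a : H) (b : G),
      ρ * (‖A a‖ ^ 2 + ‖B b‖ ^ 2) ≤ ‖a‖ ^ 2 + ‖b‖ ^ 2 - 2 * ⟪L (A a), B b⟫ := by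
  set m := ‖B.comp (L.comp A)‖
  set k := ‖A‖ ^ 2 + ‖B‖ ^ 2 + 1
  have hk : 0 < k := by positivity
  refine ⟨(1 - m) / k, div_pos (by linarith) hk, fun a b => ?_⟩
  have hAa : ‖A a‖ ^ 2 ≤ k * ‖a‖ ^ 2 := by
    nlinarith [A.le_opNorm a, norm_nonneg (A a), sq_nonneg ‖B‖, sq_nonneg ‖a‖]
  have hBb : ‖B b‖ ^ 2 ≤ k * ‖b‖ ^ 2 := by
    nlinarith [B.le_opNorm b, norm_nonneg (B b), sq_nonneg ‖A‖, sq_nonneg ‖b‖]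
  have hcross := inner_apply_le_norm_comp_mul A L hB a b
  -- `2‖a‖‖b‖ ≤ ‖a‖² + ‖b‖²` turns the cross term into the factor `1 - m`
  have hquad : (1 - m) * (‖a‖ ^ 2 + ‖b‖ ^ 2) ≤ ‖a‖ ^ 2 + ‖b‖ ^ 2 - 2 * ⟪L (A a), B b⟫ := by
    nlinarith [sq_nonneg (‖a‖ - ‖b‖), norm_nonneg (B.comp (L.comp A))]
  calc (1 - m) / k * (‖A a‖ ^ 2 + ‖B b‖ ^ 2)
      ≤ (1 - m) / k * (k * (‖a‖ ^ 2 + ‖b‖ ^ 2)) := by gcongr; linarith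
    _ = (1 - m) * (‖a‖ ^ 2 + ‖b‖ ^ 2) := by field_simp
    _ ≤ _ := hquad

end BlockForm

lemma pd_ofLp {H G : Type*} (z : WithLp 2 (H × G)) : pd z.ofLp.1 z.ofLp.2 = z := rfl

lemma norm_pd_sq {H G : Type*} [SeminormedAddCommGroup H] [SeminormedAddCommGroup G] (x : H)
    (u : G) : ‖pd x u‖ ^ 2 = ‖x‖ ^ 2 + ‖u‖ ^ 2 :=
  WithLp.prod_norm_sq_eq_of_L2 _

section HilbertSum

variable {H G : Type*} [NormedAddCommGroup H] [InnerProductSpace ℝ H]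
  [NormedAddCommGroup G] [InnerProductSpace ℝ G]

lemma inner_pd_pd (x y : H) (u v : G) : ⟪pd x u, pd y v⟫ = ⟪x, y⟫ + ⟪u, v⟫ :=
  WithLp.prod_inner_apply _ _

lemma inner_pd_block_self [CompleteSpace H] [CompleteSpace G] (P : H →L[ℝ] H) (Q : G →L[ℝ] G)
    (L : H →L[ℝ] G) (x : H) (u : G) :
    ⟪pd (P x - L.adjoint u) (Q u - L x), pd x u⟫ = ⟪P x, x⟫ + ⟪Q u, u⟫ - 2 * ⟪L x, u⟫ := by
  rw [inner_pd_pd, inner_sub_left, inner_sub_left, ContinuousLinearMap.adjoint_inner_left,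
    real_inner_comm u (L x)]
  ring

end HilbertSum

lemma range_eq_univ_and_isClosed_of_strongly_monotone {E : Type*} [NormedAddCommGroup E]
    [InnerProductSpace ℝ E] [CompleteSpace E] (T : E →L[ℝ] E)
    (hT : ∃ ρ > (0 : ℝ), ∀ z, ρ * ‖z‖ ^ 2 ≤ ⟪T z, z⟫) :
    Set.range T = Set.univ ∧ IsClosed (Set.range T) := by
  obtain ⟨ρ, hρ, hρT⟩ := hT
  set B : E →L[ℝ] E →L[ℝ] ℝ := (innerSL ℝ).comp T
  have hB : IsCoercive B := ⟨ρ, hρ, fun z => by simpa [B, ← sq, mul_assoc] using hρT z⟩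
  have hBT : InnerProductSpace.continuousLinearMapOfBilin B = T := by
    ext z
    exact (InnerProductSpace.unique_continuousLinearMapOfBilin B fun w => rfl).symm
  have hrange : Set.range T = Set.univ :=
    Set.range_eq_univ.mpr (hBT ▸ LinearMap.range_eq_top.mp hB.range_eq_top)
  exact ⟨hrange, hrange ▸ isClosed_univ⟩

theorem stmt_18_general {H G : Type*} [NormedAddCommGroup H] [InnerProductSpace ℝ H] [CompleteSpace H]
    [NormedAddCommGroup G] [InnerProductSpace ℝ G] [CompleteSpace G]
    (Ups UpsI sUps : H →L[ℝ] H) (Sg SgI sSg : G →L[ℝ] G) (L : H →L[ℝ] G)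
    (hUinv : Ups.comp UpsI = ContinuousLinearMap.id ℝ H ∧
      UpsI.comp Ups = ContinuousLinearMap.id ℝ H)
    (hSinv : Sg.comp SgI = ContinuousLinearMap.id ℝ G ∧
      SgI.comp Sg = ContinuousLinearMap.id ℝ G)
    (hsU : (∀ x y : H, ⟪sUps x, y⟫ = ⟪x, sUps y⟫) ∧ (∀ x : H, 0 ≤ ⟪sUps x, x⟫) ∧
      sUps.comp sUps = Ups)
    (hsS : (∀ u v : G, ⟪sSg u, v⟫ = ⟪u, sSg v⟫) ∧ (∀ u : G, 0 ≤ ⟪sSg u, u⟫) ∧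
      sSg.comp sSg = Sg)
    (hnorm : ‖sSg.comp (L.comp sUps)‖ < 1)
    (V : WithLp 2 (H × G) →L[ℝ] WithLp 2 (H × G))
    (hV : ∀ (x : H) (u : G),
      V (pd x u) = pd (UpsI x - ContinuousLinearMap.adjoint L u) (SgI u - L x)) :
    (∃ ρ > (0:ℝ), ∀ z : WithLp 2 (H × G), ρ * ‖z‖ ^ 2 ≤ ⟪V z, z⟫) ∧
    Set.range V = Set.univ ∧ IsClosed (Set.range V) := by
  obtain ⟨ρ, hρ, hρV⟩ := exists_pos_mul_le_of_norm_comp_lt_one sUps L hsS.1 hnorm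
  have hmono : ∀ z : WithLp 2 (H × G), ρ * ‖z‖ ^ 2 ≤ ⟪V z, z⟫ := by
    intro z
    rw [← pd_ofLp z]
    set x := z.ofLp.1
    set u := z.ofLp.2
    have hx := apply_apply_of_comp_self_eq hsU.2.2 hUinv.1 x
    have hu := apply_apply_of_comp_self_eq hsS.2.2 hSinv.1 u
    have key := hρV (sUps (UpsI x)) (sSg (SgI u))
    rw [hx, hu, ← inner_apply_self_eq_norm_sq_of_comp_self_eq hsU.1 hsU.2.2 hUinv.1,
      ← inner_apply_self_eq_norm_sq_of_comp_self_eq hsS.1 hsS.2.2 hSinv.1] at key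
    rwa [hV, inner_pd_block_self, norm_pd_sq]
  exact ⟨⟨ρ, hρ, hmono⟩, range_eq_univ_and_isClosed_of_strongly_monotone V ⟨ρ, hρ, hmono⟩⟩

/-- If `‖√Σ L √Υ‖ < 1`, then `V(x,u) = (Υ⁻¹x − L*u, Σ⁻¹u − Lx)` is strongly
monotone on `H ⊕ G`; in particular `ran V = H × G` is closed. -/
theorem stmt_18 {H G : Type*} [NormedAddCommGroup H] [InnerProductSpace ℝ H] [CompleteSpace H]
    [NormedAddCommGroup G] [InnerProductSpace ℝ G] [CompleteSpace G]
    (Ups UpsI sUps : H →L[ℝ] H) (Sg SgI sSg : G →L[ℝ] G) (L : H →L[ℝ] G)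
    (τ σ : ℝ) (hτ : 0 < τ) (hσ : 0 < σ)
    (hUsa : ∀ x y : H, ⟪Ups x, y⟫ = ⟪x, Ups y⟫)
    (hUsm : ∀ x : H, τ * ‖x‖ ^ 2 ≤ ⟪Ups x, x⟫)
    (hSsa : ∀ u v : G, ⟪Sg u, v⟫ = ⟪u, Sg v⟫)
    (hSsm : ∀ u : G, σ * ‖u‖ ^ 2 ≤ ⟪Sg u, u⟫)
    (hUinv : Ups.comp UpsI = ContinuousLinearMap.id ℝ H ∧
      UpsI.comp Ups = ContinuousLinearMap.id ℝ H)
    (hSinv : Sg.comp SgI = ContinuousLinearMap.id ℝ G ∧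
      SgI.comp Sg = ContinuousLinearMap.id ℝ G)
    (hsU : (∀ x y : H, ⟪sUps x, y⟫ = ⟪x, sUps y⟫) ∧ (∀ x : H, 0 ≤ ⟪sUps x, x⟫) ∧
      sUps.comp sUps = Ups)
    (hsS : (∀ u v : G, ⟪sSg u, v⟫ = ⟪u, sSg v⟫) ∧ (∀ u : G, 0 ≤ ⟪sSg u, u⟫) ∧
      sSg.comp sSg = Sg)
    (hnorm : ‖sSg.comp (L.comp sUps)‖ < 1)
    (V : WithLp 2 (H × G) →L[ℝ] WithLp 2 (H × G))
    (hV : ∀ (x : H) (u : G),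
      V (pd x u) = pd (UpsI x - ContinuousLinearMap.adjoint L u) (SgI u - L x)) :
    (∃ ρ > (0:ℝ), ∀ z : WithLp 2 (H × G), ρ * ‖z‖ ^ 2 ≤ ⟪V z, z⟫) ∧
    Set.range V = Set.univ ∧ IsClosed (Set.range V) :=
  stmt_18_general Ups UpsI sUps Sg SgI sSg L hUinv hSinv hsU hsS hnorm V hV
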